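/- arXiv:0711.1373 — 3 statements merged into one kernel-verified Lean document; each statement's English description precedes it below -/
import Mathlib

section
/- For every real t with 0 ≤ t ≤ 2π, the series ∑_{n=1}^∞ sin(nt)/n² converges and equals −∫_0^t ln(2 sin(ξ/2)) dξ. -/
/-!
For `|x| < 1` the real part of `-log (1 - x e^{iξ}) = ∑ (x e^{iξ})ⁿ / n` gives
`∑ xⁿ cos (nξ) / n = -log ‖1 - x e^{iξ}‖`, and integrating term by term over `[0, t]` gives
`∑ sin (nt) / n² · xⁿ = -∫₀ᵗ log ‖1 - x e^{iξ}‖ dξ`. Let `x → 1⁻`: the left side tends to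
`∑ sin (nt) / n²` by Abel's limit theorem, the right side to `-∫₀ᵗ log ‖1 - e^{iξ}‖ dξ` by dominated
convergence: for `x ∈ [0, 1)` we have `‖1 - e^{iξ}‖ ≤ 2 ‖1 - x e^{iξ}‖ ≤ 4`, so the integrands
are bounded by `log 2 + |log ‖1 - e^{iξ}‖|`, which is integrable because
`‖1 - e^{iξ}‖ = |2 sin (ξ / 2)|` is the absolute value of an analytic function.
-/

open Real
open Filter Topology MeasureTheory
open Complex (I)

theorem hasSum_pow_mul_cos_div {x : ℝ} (hx : |x| < 1) (ξ : ℝ) :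
    HasSum (fun n : ℕ => x ^ n * Real.cos (n * ξ) / n)
      (-Real.log ‖1 - x * Complex.exp (ξ * I)‖) := by
  have hz : ‖(x : ℂ) * Complex.exp (ξ * I)‖ < 1 := by
    rwa [norm_mul, Complex.norm_real, Complex.norm_exp_ofReal_mul_I, mul_one]
  convert Complex.hasSum_re (Complex.hasSum_taylorSeries_neg_log hz) using 1
  · ext n
    rw [mul_pow, ← Complex.exp_nat_mul, ← mul_assoc, ← Complex.ofReal_natCast,
      ← Complex.ofReal_mul, ← Complex.ofReal_pow, Complex.div_ofReal_re,
      Complex.re_ofReal_mul, Complex.exp_ofReal_mul_I_re]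
  · simp [Complex.log_re]

theorem integral_pow_mul_cos_div (x t : ℝ) (n : ℕ) :
    ∫ ξ in 0..t, x ^ n * Real.cos (n * ξ) / n = Real.sin (n * t) / n ^ 2 * x ^ n := by
  rcases Nat.eq_zero_or_pos n with rfl | hn
  · simp
  have hn' : (n : ℝ) ≠ 0 := by positivity
  simp only [mul_div_right_comm _ (Real.cos _), intervalIntegral.integral_const_mul,
    intervalIntegral.integral_comp_mul_left (fun y => Real.cos y) hn', integral_cos]
  simp only [mul_zero, sin_zero, sub_zero, smul_eq_mul]
  field_simp

theorem hasSum_sin_mul_div_sq_mul_pow {x : ℝ} (hx : |x| < 1) (t : ℝ) :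
    HasSum (fun n : ℕ => Real.sin (n * t) / n ^ 2 * x ^ n)
      (-∫ ξ in 0..t, Real.log ‖1 - x * Complex.exp (ξ * I)‖) := by
  have h := intervalIntegral.hasSum_integral_of_dominated_convergence (μ := volume) (a := 0)
    (b := t) (F := fun (n : ℕ) (ξ : ℝ) => x ^ n * Real.cos (n * ξ) / n)
    (bound := fun n _ => |x| ^ n) (fun n => by fun_prop)
    (fun n => ae_of_all _ fun ξ _ => ?_)
    (ae_of_all _ fun ξ _ => summable_geometric_of_lt_one (abs_nonneg x) hx)
    intervalIntegrable_const
    (ae_of_all _ fun ξ _ => hasSum_pow_mul_cos_div hx ξ)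
  · simpa only [integral_pow_mul_cos_div, intervalIntegral.integral_neg] using h
  · rw [Real.norm_eq_abs, abs_div, abs_mul, abs_pow, Nat.abs_cast]
    exact (div_nat_le_self_of_nonnneg (by positivity) n).trans
      (mul_le_of_le_one_right (by positivity) (abs_cos_le_one _))

theorem summable_sin_mul_div_sq (t : ℝ) :
    Summable (fun n : ℕ => Real.sin (n * t) / (n : ℝ) ^ 2) :=
  (Real.summable_one_div_nat_pow.mpr one_lt_two).of_norm_bounded fun n => by
    rw [Real.norm_eq_abs, abs_div, abs_of_nonneg (sq_nonneg (n : ℝ))]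
    exact div_le_div_of_nonneg_right (abs_sin_le_one _) (sq_nonneg (n : ℝ))

theorem norm_one_sub_le_two_mul_norm_one_sub_mul {z : ℂ} (hz : ‖z‖ ≤ 1) {x : ℝ}
    (hx : x ∈ Set.Icc (0 : ℝ) 1) : ‖1 - z‖ ≤ 2 * ‖1 - x * z‖ := by
  have hxz : ‖(x : ℂ) * z‖ ≤ x := by
    rw [norm_mul, Complex.norm_real, Real.norm_of_nonneg hx.1]
    exact mul_le_of_le_one_right hx.1 hz
  have h1 : 1 - x ≤ ‖1 - x * z‖ := by
    linarith [norm_sub_norm_le (1 : ℂ) (x * z), norm_one (α := ℂ)]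
  have h2 : ‖x * z - z‖ ≤ 1 - x := by
    rw [← sub_one_mul, norm_mul, ← Complex.ofReal_one, ← Complex.ofReal_sub, Complex.norm_real,
      Real.norm_of_nonpos (by linarith [hx.2]), neg_sub]
    exact mul_le_of_le_one_right (by linarith [hx.2]) hz
  calc ‖1 - z‖ = ‖(1 - x * z) + (x * z - z)‖ := by ring_nf
    _ ≤ ‖1 - x * z‖ + ‖x * z - z‖ := norm_add_le _ _
    _ ≤ 2 * ‖1 - x * z‖ := by linarith

theorem abs_log_norm_one_sub_mul_le {z : ℂ} (hz : ‖z‖ ≤ 1) (hz1 : z ≠ 1) {x : ℝ}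
    (hx : x ∈ Set.Icc (0 : ℝ) 1) :
    |Real.log ‖1 - x * z‖| ≤ Real.log 2 + |Real.log ‖1 - z‖| := by
  have hpos : 0 < ‖1 - z‖ := norm_pos_iff.mpr (sub_ne_zero.mpr hz1.symm)
  have hlower := norm_one_sub_le_two_mul_norm_one_sub_mul hz hx
  have hupper : ‖1 - x * z‖ ≤ 2 := by
    calc ‖1 - x * z‖ ≤ ‖(1 : ℂ)‖ + ‖(x : ℂ) * z‖ := norm_sub_le _ _
      _ ≤ 2 := by
        rw [norm_one, norm_mul, Complex.norm_real, Real.norm_of_nonneg hx.1]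
        nlinarith [hx.2, norm_nonneg z]
  have hpos' : 0 < ‖1 - x * z‖ := by linarith
  have h1 : Real.log ‖1 - x * z‖ ≤ Real.log 2 := Real.log_le_log hpos' hupper
  have h2 : Real.log ‖1 - z‖ ≤ Real.log 2 + Real.log ‖1 - x * z‖ := by
    rw [← Real.log_mul two_ne_zero hpos'.ne']
    exact Real.log_le_log hpos hlower
  rw [abs_le]
  constructor <;> linarith [le_abs_self (Real.log ‖1 - z‖), neg_abs_le (Real.log ‖1 - z‖),
    Real.log_nonneg one_le_two]

theorem ae_exp_mul_I_ne_one : ∀ᵐ ξ : ℝ, Complex.exp (ξ * I) ≠ 1 := by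
  refine measure_mono_null (fun ξ hξ => ?_)
    ((Set.countable_range fun n : ℤ => n * (2 * π)).measure_zero volume)
  obtain ⟨n, hn⟩ := Complex.exp_eq_one_iff.mp (not_not.mp hξ)
  refine ⟨n, Complex.ofReal_injective (mul_right_cancel₀ Complex.I_ne_zero ?_)⟩
  push_cast
  linear_combination -hn

theorem log_norm_one_sub_exp_mul_I (ξ : ℝ) :
    Real.log ‖1 - Complex.exp (ξ * I)‖ = Real.log (2 * Real.sin (ξ / 2)) := by
  rw [norm_sub_rev, mul_comm, Complex.norm_exp_I_mul_ofReal_sub_one, Real.norm_eq_abs,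
    Real.log_abs]

theorem intervalIntegrable_log_two_mul_sin_half (a b : ℝ) :
    IntervalIntegrable (fun ξ => Real.log (2 * Real.sin (ξ / 2))) volume a b :=
  (show AnalyticOnNhd ℝ (fun ξ => 2 * Real.sin (ξ / 2)) _ from fun _ _ => by fun_prop)
    |>.meromorphicOn.intervalIntegrable_log

theorem tendsto_integral_log_norm_one_sub_mul_exp (t : ℝ) :
    Tendsto (fun x : ℝ => ∫ ξ in 0..t, Real.log ‖1 - x * Complex.exp (ξ * I)‖) (𝓝[<] 1)
      (𝓝 (∫ ξ in 0..t, Real.log ‖1 - Complex.exp (ξ * I)‖)) := by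
  have hexp (ξ : ℝ) : ‖Complex.exp (ξ * I)‖ ≤ 1 := (Complex.norm_exp_ofReal_mul_I ξ).le
  refine intervalIntegral.tendsto_integral_filter_of_dominated_convergence
    (fun ξ => Real.log 2 + |Real.log ‖1 - Complex.exp (ξ * I)‖|)
    (Eventually.of_forall fun x => (by fun_prop : Measurable _).aestronglyMeasurable) ?_ ?_ ?_
  · filter_upwards [Ioo_mem_nhdsLT zero_lt_one] with x hx
    filter_upwards [ae_exp_mul_I_ne_one] with ξ hξ _
    exact abs_log_norm_one_sub_mul_le (hexp ξ) hξ (Set.Ioo_subset_Icc_self hx)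
  · simp only [log_norm_one_sub_exp_mul_I]
    exact intervalIntegrable_const.add (intervalIntegrable_log_two_mul_sin_half 0 t).abs
  · filter_upwards [ae_exp_mul_I_ne_one] with ξ hξ _
    have hcont : ContinuousAt (fun x : ℝ => Real.log ‖1 - x * Complex.exp (ξ * I)‖) 1 :=
      ContinuousAt.log (by fun_prop) (by simpa [sub_eq_zero] using hξ.symm)
    simpa using hcont.tendsto.mono_left nhdsWithin_le_nhds

theorem sum_sin_div_sq_general (t : ℝ) :
    HasSum (fun n : ℕ => Real.sin ((n + 1) * t) / ((n : ℝ) + 1) ^ 2)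
      (-∫ ξ in (0:ℝ)..t, Real.log (2 * Real.sin (ξ / 2))) := by
  have hsum := summable_sin_mul_div_sq t
  have habel := Real.tendsto_tsum_powerSeries_nhdsWithin_lt hsum.hasSum.tendsto_sum_nat
  have hlim := (tendsto_integral_log_norm_one_sub_mul_exp t).neg
  have hval : ∑' n : ℕ, Real.sin (n * t) / (n : ℝ) ^ 2
      = -∫ ξ in 0..t, Real.log (2 * Real.sin (ξ / 2)) := by
    simp only [← log_norm_one_sub_exp_mul_I]
    refine tendsto_nhds_unique habel (hlim.congr' ?_)
    filter_upwards [Ioo_mem_nhdsLT (neg_lt_self one_pos)] with x hx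
    exact (hasSum_sin_mul_div_sq_mul_pow (abs_lt.mpr hx) t).tsum_eq.symm
  simpa [hval] using (hasSum_nat_add_iff' 1).mpr hsum.hasSum

/-- For `0 ≤ t ≤ 2π`, `∑_{n=1}^∞ sin(nt)/n² = -∫_0^t ln(2 sin(ξ/2)) dξ`. -/
theorem sum_sin_div_sq (t : ℝ) (ht0 : 0 ≤ t) (ht : t ≤ 2 * π) :
    HasSum (fun n : ℕ => Real.sin ((n + 1) * t) / ((n : ℝ) + 1) ^ 2)
      (-∫ ξ in (0:ℝ)..t, Real.log (2 * Real.sin (ξ / 2))) :=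
  sum_sin_div_sq_general t
end

section
/- (Sokal) Let D be a nonempty open connected subset of ℂ, let z₀ ∈ D, let (g_n) be a sequence of functions analytic on D, and let (a_n) be a sequence of positive real numbers such that the functions |g_n|^{a_n} are uniformly bounded on every compact subset of D. Suppose there does not exist an open neighborhood V ⊆ D of z₀ and a function v on V that is either harmonic on V or identically −∞ such that liminf_{n→∞} a_n ln|g_n(z)| ≤ v(z) ≤ limsup_{n→∞} a_n ln|g_n(z)| for all z ∈ V. Then for every ε > 0 there exists N such that for all n ≥ N the function g_n has a zero z_n* with |z_n* − z₀| < ε; in particular there exist zeros z_n* of g_n with z_n* → z₀. -/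
/-!
Suppose infinitely many `gₙ` have no zero in the `ε`-disc around `z₀`. On a small disc `B` around
`z₀` these `gₙ` have holomorphic logarithms, so `Fₙ = exp (aₙ log gₙ)` is holomorphic on `B` with
`|Fₙ| = |gₙ|^{aₙ}`, and the `Fₙ` are uniformly bounded on `B`. Bounded holomorphic families are
equicontinuous (Schwarz lemma), so along an ultrafilter on these indices `Fₙ` converges locally
uniformly to a holomorphic `F`. By Hurwitz's theorem `F` either has no zero near `z₀` or vanishes
identically near `z₀`; accordingly `aₙ ln|gₙ| = ln|Fₙ|` converges near `z₀` to the harmonic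
function `ln|F|` or to `-∞`. A limit along a filter finer than `atTop` lies between `liminf` and
`limsup`, contradicting the hypothesis.
-/

open Complex Filter

/-- `v` is harmonic on `V`: twice continuously differentiable with vanishing Laplacian,
where the Laplacian is the sum of the second directional derivatives in the directions
`1` and `i`. -/
def HarmonicOnSet (v : ℂ → ℝ) (V : Set ℂ) : Prop :=
  ContDiffOn ℝ 2 v V ∧ ∀ z ∈ V,
    fderiv ℝ (fun w => fderiv ℝ v w 1) z 1 +
      fderiv ℝ (fun w => fderiv ℝ v w Complex.I) z Complex.I = 0

/-- `ln|w|` as an extended real number, interpreted as `-∞` when `w = 0`. -/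
noncomputable def logAbsE (w : ℂ) : EReal := if w = 0 then ⊥ else (Real.log ‖w‖ : EReal)

open Metric Topology InnerProductSpace

theorem fderiv_fderiv_apply_eq_iteratedFDeriv_two {𝕜 E F : Type*} [NontriviallyNormedField 𝕜]
    [NormedAddCommGroup E] [NormedSpace 𝕜 E] [NormedAddCommGroup F] [NormedSpace 𝕜 F]
    {f : E → F} {z : E} (hf : ContDiffAt 𝕜 2 f z) (u : E) :
    fderiv 𝕜 (fun w => fderiv 𝕜 f w u) z u = iteratedFDeriv 𝕜 2 f z ![u, u] := by
  have hd : DifferentiableAt 𝕜 (fderiv 𝕜 f) z :=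
    (hf.fderiv_right (m := 1) (by norm_num)).differentiableAt (by norm_num)
  rw [iteratedFDeriv_two_apply, fderiv_clm_apply hd (differentiableAt_const u)]
  simp

theorem harmonicOnSet_of_harmonicAt {v : ℂ → ℝ} {V : Set ℂ} (h : ∀ z ∈ V, HarmonicAt v z) :
    HarmonicOnSet v V := by
  refine ⟨fun z hz => (h z hz).1.contDiffWithinAt, fun z hz => ?_⟩
  rw [fderiv_fderiv_apply_eq_iteratedFDeriv_two (h z hz).1,
    fderiv_fderiv_apply_eq_iteratedFDeriv_two (h z hz).1,
    ← congrFun (laplacian_eq_iteratedFDeriv_complexPlane v) z]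
  exact (h z hz).2.eq_of_nhds

-- A primitive `h` of `f' / f` makes `f * exp (-h)` constant; it is normalised at one point.
theorem exists_differentiableOn_exp_eq_on_ball {f : ℂ → ℂ} {c : ℂ} {R : ℝ}
    (hf : DifferentiableOn ℂ f (ball c R)) (hne : ∀ z ∈ ball c R, f z ≠ 0) :
    ∃ h : ℂ → ℂ, DifferentiableOn ℂ h (ball c R) ∧ ∀ z ∈ ball c R, exp (h z) = f z := by
  rcases (ball c R).eq_empty_or_nonempty with hempty | ⟨z₀, hz₀⟩
  · exact ⟨0, by simp [hempty], by simp [hempty]⟩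
  have hf' : DifferentiableOn ℂ (deriv f) (ball c R) :=
    (hf.analyticOnNhd isOpen_ball).deriv.differentiableOn
  obtain ⟨h, h₀, hh⟩ := ((hf'.div hf hne).isExactOn_ball).with_val_at z₀ (log (f z₀))
  have hhd : DifferentiableOn ℂ h (ball c R) := fun z hz =>
    (hh z hz).differentiableAt.differentiableWithinAt
  refine ⟨h, hhd, fun z hz => ?_⟩
  have hconst : f z * exp (-h z) = f z₀ * exp (-h z₀) := by
    refine isOpen_ball.is_const_of_deriv_eq_zero (convex_ball c R).isPreconnected
      (hf.mul hhd.neg.cexp) (fun w hw => ?_) hz hz₀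
    have hfw : HasDerivAt f (deriv f w) w :=
      (hf.differentiableAt (isOpen_ball.mem_nhds hw)).hasDerivAt
    rw [(hfw.mul (hh w hw).neg.cexp).deriv]
    simp only [Pi.neg_apply, Pi.div_apply, Pi.zero_apply]
    field_simp [hne w hw]
    ring
  rw [h₀, exp_neg, exp_neg, exp_log (hne z₀ hz₀), mul_inv_cancel₀ (hne z₀ hz₀)] at hconst
  field_simp at hconst
  exact hconst.symm

theorem exists_differentiableOn_norm_eq_rpow {f : ℂ → ℂ} {c : ℂ} {R : ℝ}
    (hf : DifferentiableOn ℂ f (ball c R)) (hne : ∀ z ∈ ball c R, f z ≠ 0) (a : ℝ) :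
    ∃ F : ℂ → ℂ, DifferentiableOn ℂ F (ball c R) ∧ ∀ z ∈ ball c R, ‖F z‖ = ‖f z‖ ^ a := by
  obtain ⟨h, hd, hexp⟩ := exists_differentiableOn_exp_eq_on_ball hf hne
  refine ⟨fun z => exp (a * h z), (hd.const_mul _).cexp, fun z hz => ?_⟩
  rw [← hexp z hz, norm_exp, norm_exp, Real.rpow_def_of_pos (Real.exp_pos _), Real.log_exp]
  simp [mul_comm]

theorem EquicontinuousOn.tendstoUniformlyOn_of_tendsto {ι X α : Type*} [TopologicalSpace X]
    [UniformSpace α] {F : ι → X → α} {f : X → α} {l : Filter ι} {K : Set X} (hK : IsCompact K)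
    (hF : EquicontinuousOn F K) (h : ∀ x ∈ K, Tendsto (F · x) l (𝓝 (f x))) :
    TendstoUniformlyOn F f l K := by
  have : CompactSpace K := isCompact_iff_compactSpace.mp hK
  rw [tendstoUniformlyOn_iff_tendstoUniformly_comp_coe]
  exact UniformFun.tendsto_iff_tendstoUniformly.1 <|
    ((equicontinuous_restrict_iff F).2 hF).tendsto_uniformFun_iff_pi l _ |>.2
      (tendsto_pi_nhds.2 fun x => h x x.2)

-- By the Schwarz lemma, on a disc of radius `ρ` in `U` every `F i` is `2M/ρ`-Lipschitz
-- with respect to the centre.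
theorem equicontinuousOn_of_norm_le {ι : Type*} {F : ι → ℂ → ℂ} {U : Set ℂ} {M : ℝ}
    (hU : IsOpen U) (hF : ∀ i, DifferentiableOn ℂ (F i) U) (hM : ∀ i, ∀ z ∈ U, ‖F i z‖ ≤ M) :
    EquicontinuousOn F U := by
  intro w hw
  obtain ⟨ρ, hρ, hball⟩ := Metric.isOpen_iff.1 hU w hw
  refine (equicontinuousAt_of_continuity_modulus (fun z => 2 * M / ρ * dist z w) ?_ F ?_)
    |>.equicontinuousWithinAt U
  · simpa using ((tendsto_id (x := 𝓝 w)).dist (tendsto_const_nhds (x := w))).const_mul (2 * M / ρ)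
  · filter_upwards [ball_mem_nhds w hρ] with z hz i
    rw [dist_comm]
    refine dist_le_div_mul_dist_of_mapsTo_ball ((hF i).mono hball) (fun ζ hζ => ?_) hz
    rw [mem_closedBall]
    linarith [dist_le_norm_add_norm (F i ζ) (F i w), hM i ζ (hball hζ), hM i w hw]

theorem exists_tendstoLocallyUniformlyOn_of_norm_le {ι : Type*} (𝒰 : Ultrafilter ι)
    {F : ι → ℂ → ℂ} {U : Set ℂ} {M : ℝ} (hU : IsOpen U) (hF : ∀ i, DifferentiableOn ℂ (F i) U)
    (hM : ∀ i, ∀ z ∈ U, ‖F i z‖ ≤ M) : ∃ f : ℂ → ℂ, TendstoLocallyUniformlyOn F f 𝒰 U := by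
  have hlim : ∀ z ∈ U, ∃ w, Tendsto (F · z) 𝒰 (𝓝 w) := fun z hz =>
    let ⟨w, _, hw⟩ := (isCompact_closedBall (0 : ℂ) M).ultrafilter_le_nhds (𝒰.map (F · z))
      (tendsto_principal.2 (.of_forall fun i => by simpa using hM i z hz))
    ⟨w, hw⟩
  choose! f hf using hlim
  refine ⟨f, (tendstoLocallyUniformlyOn_iff_forall_isCompact hU).2 fun K hKU hK => ?_⟩
  exact ((equicontinuousOn_of_norm_le hU hF hM).mono hKU).tendstoUniformlyOn_of_tendsto hK
    fun z hz => hf z (hKU hz)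

-- Minimum modulus principle: the maximum modulus principle applied to `1 / F`.
theorem le_norm_of_le_norm_sphere {F : ℂ → ℂ} {c : ℂ} {ρ m : ℝ} (hρ : 0 < ρ) (hm : 0 < m)
    (hF : DifferentiableOn ℂ F (closedBall c ρ)) (hne : ∀ z ∈ closedBall c ρ, F z ≠ 0)
    (hsphere : ∀ z ∈ sphere c ρ, m ≤ ‖F z‖) : m ≤ ‖F c‖ := by
  have hinv : DiffContOnCl ℂ (fun z => (F z)⁻¹) (ball c ρ) := by
    rw [← closure_ball c hρ.ne'] at hF hne
    exact (hF.inv hne).diffContOnCl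
  have := norm_le_of_forall_mem_frontier_norm_le isBounded_ball hinv
    (C := m⁻¹) (fun z hz => ?_) (subset_closure (mem_ball_self hρ))
  · rw [norm_inv] at this
    exact (inv_le_inv₀ (norm_pos_iff.2 (hne c (mem_closedBall_self hρ.le))) hm).1 this
  · rw [frontier_ball c hρ.ne'] at hz
    rw [norm_inv]
    exact inv_anti₀ hm (hsphere z hz)

theorem exists_closedBall_subset_and_ne_zero_on_sphere {f : ℂ → ℂ} {U : Set ℂ} {z₀ : ℂ}
    (hU : U ∈ 𝓝 z₀) (hf : ∀ᶠ z in 𝓝[≠] z₀, f z ≠ 0) :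
    ∃ ρ > 0, closedBall z₀ ρ ⊆ U ∧ ∀ z ∈ sphere z₀ ρ, f z ≠ 0 := by
  obtain ⟨ρ₁, hρ₁, hball₁⟩ := Metric.mem_nhds_iff.1 hU
  obtain ⟨ρ₂, hρ₂, hball₂⟩ := Metric.mem_nhdsWithin_iff.1 hf
  refine ⟨min ρ₁ ρ₂ / 2, by positivity, (closedBall_subset_ball ?_).trans hball₁,
    fun z hz => hball₂ ⟨?_, ?_⟩⟩
  · linarith [min_le_left ρ₁ ρ₂, lt_min hρ₁ hρ₂]
  · rw [mem_ball, mem_sphere.1 hz]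
    linarith [min_le_right ρ₁ ρ₂, lt_min hρ₁ hρ₂]
  · rintro rfl
    simp only [mem_sphere, dist_self] at hz
    linarith [lt_min hρ₁ hρ₂]

-- Hurwitz's theorem. Otherwise the zero of `f` at `z₀` is isolated, `|f| ≥ m > 0` on a small
-- circle around `z₀`, and for `F i` close to `f` the minimum modulus principle forces
-- `|F i z₀| ≥ m / 2`, although `F i z₀ → 0`.
theorem eventually_eq_zero_of_tendstoLocallyUniformlyOn {ι : Type*} {l : Filter ι} [l.NeBot]
    {F : ι → ℂ → ℂ} {f : ℂ → ℂ} {U : Set ℂ} {z₀ : ℂ} (hU : IsOpen U)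
    (hF : ∀ i, DifferentiableOn ℂ (F i) U) (hne : ∀ i, ∀ z ∈ U, F i z ≠ 0)
    (hlim : TendstoLocallyUniformlyOn F f l U) (hz₀ : z₀ ∈ U) (h0 : f z₀ = 0) :
    ∀ᶠ z in 𝓝 z₀, f z = 0 := by
  have hfd : DifferentiableOn ℂ f U := hlim.differentiableOn (.of_forall hF) hU
  refine (hfd.analyticAt (hU.mem_nhds hz₀)).eventually_eq_zero_or_eventually_ne_zero.resolve_right
    fun hnz => ?_
  obtain ⟨ρ, hρ, hρU, hsphere⟩ :=
    exists_closedBall_subset_and_ne_zero_on_sphere (hU.mem_nhds hz₀) hnz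
  have hsphereU : sphere z₀ ρ ⊆ U := sphere_subset_closedBall.trans hρU
  obtain ⟨zm, hzm, hmin⟩ := (isCompact_sphere z₀ ρ).exists_isMinOn
    (NormedSpace.sphere_nonempty.2 hρ.le) (hfd.continuousOn.mono hsphereU).norm
  set m := ‖f zm‖
  have hm : 0 < m := norm_pos_iff.2 (hsphere zm hzm)
  have hunif := Metric.tendstoUniformlyOn_iff.1
    ((tendstoLocallyUniformlyOn_iff_forall_isCompact hU).1 hlim _ hsphereU
      (isCompact_sphere z₀ ρ)) (m / 2) (half_pos hm)
  have hcenter : ∀ᶠ i in l, ‖F i z₀‖ < m / 2 := by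
    have := (hlim.tendsto_at hz₀).norm
    rw [h0, norm_zero] at this
    exact this.eventually_lt_const (half_pos hm)
  obtain ⟨i, hi, hi₀⟩ := (hunif.and hcenter).exists
  have : m / 2 ≤ ‖F i z₀‖ := le_norm_of_le_norm_sphere hρ (half_pos hm) ((hF i).mono hρU)
    (fun z hz => hne i z (hρU hz)) fun z hz => by
      have hmz : m ≤ ‖f z‖ := isMinOn_iff.1 hmin z hz
      linarith [hi z hz, norm_sub_norm_le (f z) (F i z), dist_eq_norm (f z) (F i z)]
  linarith

theorem exists_harmonicOnSet_or_bot_tendsto_log_norm {ι : Type*} {l : Filter ι} [l.NeBot]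
    {F : ι → ℂ → ℂ} {f : ℂ → ℂ} {U : Set ℂ} {z₀ : ℂ} (hU : IsOpen U)
    (hF : ∀ i, DifferentiableOn ℂ (F i) U) (hne : ∀ i, ∀ z ∈ U, F i z ≠ 0)
    (hlim : TendstoLocallyUniformlyOn F f l U) (hz₀ : z₀ ∈ U) :
    ∃ V ⊆ U, IsOpen V ∧ z₀ ∈ V ∧ ∃ v : ℂ → EReal,
      ((∃ h : ℂ → ℝ, HarmonicOnSet h V ∧ ∀ z ∈ V, v z = h z) ∨ ∀ z ∈ V, v z = ⊥) ∧
      ∀ z ∈ V, Tendsto (fun i => (Real.log ‖F i z‖ : EReal)) l (𝓝 (v z)) := by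
  have hfd : DifferentiableOn ℂ f U := hlim.differentiableOn (.of_forall hF) hU
  by_cases h0 : f z₀ = 0
  · obtain ⟨V, hV, hVo, hz₀V⟩ := _root_.mem_nhds_iff.1 <| inter_mem
      (eventually_eq_zero_of_tendstoLocallyUniformlyOn hU hF hne hlim hz₀ h0) (hU.mem_nhds hz₀)
    refine ⟨V, fun z hz => (hV hz).2, hVo, hz₀V, fun _ => ⊥, Or.inr fun _ _ => rfl,
      fun z hz => ?_⟩
    have hnorm : Tendsto (fun i => ‖F i z‖) l (𝓝[>] 0) := by
      refine tendsto_nhdsWithin_iff.2 ⟨?_, .of_forall fun i => norm_pos_iff.2 (hne i z (hV hz).2)⟩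
      have hfz : f z = 0 := (hV hz).1
      simpa [hfz] using (hlim.tendsto_at (hV hz).2).norm
    exact EReal.tendsto_coe_atBot.comp (Real.tendsto_log_nhdsGT_zero.comp hnorm)
  · refine ⟨U ∩ f ⁻¹' {0}ᶜ, Set.inter_subset_left,
      hfd.continuousOn.isOpen_inter_preimage hU isOpen_compl_singleton, ⟨hz₀, h0⟩,
      fun z => (Real.log ‖f z‖ : EReal), Or.inl ⟨_, harmonicOnSet_of_harmonicAt fun z hz =>
        (hfd.analyticAt (hU.mem_nhds hz.1)).harmonicAt_log_norm hz.2, fun _ _ => rfl⟩,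
      fun z hz => ?_⟩
    exact EReal.tendsto_coe.2 ((hlim.tendsto_at hz.1).norm.log (norm_ne_zero_iff.2 hz.2))

theorem coe_mul_logAbsE {w : ℂ} (hw : w ≠ 0) (a : ℝ) :
    (a : EReal) * logAbsE w = (Real.log (‖w‖ ^ a) : EReal) := by
  rw [logAbsE, if_neg hw, Real.log_rpow (norm_pos_iff.2 hw), EReal.coe_mul]

theorem exists_harmonicOnSet_or_bot_tendsto_mul_logAbsE {ι : Type*} (𝒰 : Ultrafilter ι)
    {g : ι → ℂ → ℂ} {a : ι → ℝ} {c : ℂ} {R M : ℝ} (hR : 0 < R)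
    (hg : ∀ i, DifferentiableOn ℂ (g i) (ball c R)) (hne : ∀ i, ∀ z ∈ ball c R, g i z ≠ 0)
    (hM : ∀ i, ∀ z ∈ ball c R, ‖g i z‖ ^ a i ≤ M) :
    ∃ V ⊆ ball c R, IsOpen V ∧ c ∈ V ∧ ∃ v : ℂ → EReal,
      ((∃ h : ℂ → ℝ, HarmonicOnSet h V ∧ ∀ z ∈ V, v z = h z) ∨ ∀ z ∈ V, v z = ⊥) ∧
      ∀ z ∈ V, Tendsto (fun i => (a i : EReal) * logAbsE (g i z)) 𝒰 (𝓝 (v z)) := by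
  choose F hFd hFnorm using fun i => exists_differentiableOn_norm_eq_rpow (hg i) (hne i) (a i)
  have hFne : ∀ i, ∀ z ∈ ball c R, F i z ≠ 0 := fun i z hz => by
    rw [← norm_pos_iff, hFnorm i z hz]
    exact Real.rpow_pos_of_pos (norm_pos_iff.2 (hne i z hz)) _
  obtain ⟨f, hf⟩ := exists_tendstoLocallyUniformlyOn_of_norm_le 𝒰 isOpen_ball hFd
    fun i z hz => (hFnorm i z hz).trans_le (hM i z hz)
  obtain ⟨V, hVB, hVo, hcV, v, hv, hlog⟩ :=
    exists_harmonicOnSet_or_bot_tendsto_log_norm isOpen_ball hFd hFne hf (mem_ball_self hR)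
  refine ⟨V, hVB, hVo, hcV, v, hv, fun z hz => (hlog z hz).congr fun i => ?_⟩
  rw [coe_mul_logAbsE (hne i z (hVB hz)), hFnorm i z (hVB hz)]

theorem sokal_zero_accumulation_general
    (D : Set ℂ) (hDopen : IsOpen D)
    (z₀ : ℂ) (hz₀ : z₀ ∈ D)
    (g : ℕ → ℂ → ℂ) (hg : ∀ n, DifferentiableOn ℂ (g n) D)
    (a : ℕ → ℝ)
    (hbd : ∀ K ⊆ D, IsCompact K → ∃ M : ℝ, ∀ n, ∀ z ∈ K, ‖g n z‖ ^ a n ≤ M)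
    (hno : ¬ ∃ (V : Set ℂ) (v : ℂ → EReal), IsOpen V ∧ z₀ ∈ V ∧ V ⊆ D ∧
      ((∃ h : ℂ → ℝ, HarmonicOnSet h V ∧ ∀ z ∈ V, v z = (h z : EReal)) ∨
        (∀ z ∈ V, v z = ⊥)) ∧
      (∀ z ∈ V,
        liminf (fun n => (a n : EReal) * logAbsE (g n z)) atTop ≤ v z ∧
        v z ≤ limsup (fun n => (a n : EReal) * logAbsE (g n z)) atTop)) :
    ∀ ε > 0, ∃ N : ℕ, ∀ n ≥ N, ∃ z, z ∈ D ∧ g n z = 0 ∧ ‖z - z₀‖ < ε := by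
  intro ε hε
  by_contra! hfar
  set S := {n | ∀ z ∈ D, g n z = 0 → ε ≤ ‖z - z₀‖}
  obtain ⟨r, hr, hrD⟩ := nhds_basis_closedBall.mem_iff.1 (hDopen.mem_nhds hz₀)
  have hBr : ball z₀ (min r ε) ⊆ closedBall z₀ r :=
    ball_subset_closedBall.trans (closedBall_subset_closedBall (min_le_left r ε))
  have hBD : ball z₀ (min r ε) ⊆ D := hBr.trans hrD
  have hgne : ∀ n ∈ S, ∀ z ∈ ball z₀ (min r ε), g n z ≠ 0 := fun n hn z hz h0 => by
    have := hn z (hBD hz) h0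
    rw [mem_ball, dist_eq_norm] at hz
    linarith [min_le_right r ε]
  obtain ⟨M, hM⟩ := hbd _ hrD (isCompact_closedBall z₀ r)
  have : (atTop.comap ((↑) : S → ℕ)).NeBot := comap_neBot_iff_frequently.2 <| by
    simpa [frequently_atTop, S] using hfar
  set 𝒰 := Ultrafilter.of (atTop.comap ((↑) : S → ℕ))
  have h𝒰 : Tendsto ((↑) : S → ℕ) 𝒰 atTop := tendsto_iff_comap.2 (Ultrafilter.of_le _)
  obtain ⟨V, hVB, hVo, hz₀V, v, hv, hlim⟩ := exists_harmonicOnSet_or_bot_tendsto_mul_logAbsE 𝒰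
    (lt_min hr hε) (fun n => (hg n).mono hBD) (fun n => hgne n n.2)
    fun n z hz => hM n z (hBr hz)
  refine hno ⟨V, v, hVo, hz₀V, hVB.trans hBD, hv, fun z hz => ?_⟩
  have hcl : MapClusterPt (v z) atTop fun n => (a n : EReal) * logAbsE (g n z) :=
    (hlim z hz).mapClusterPt.of_comp h𝒰
  exact ⟨hcl.liminf_le, hcl.le_limsup⟩

/-- Sokal's theorem: let `D` be a nonempty open connected subset of `ℂ`, `z₀ ∈ D`,
`(gₙ)` analytic on `D`, and `(aₙ)` positive reals with `|gₙ|^{aₙ}` uniformly bounded on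
compact subsets of `D`.  If there is no neighborhood `V ⊆ D` of `z₀` and function `v` on
`V`, either harmonic or identically `-∞`, with
`liminf aₙ ln|gₙ(z)| ≤ v(z) ≤ limsup aₙ ln|gₙ(z)|` on `V`, then for every `ε > 0`,
eventually every `gₙ` has a zero within `ε` of `z₀`. -/
theorem sokal_zero_accumulation
    (D : Set ℂ) (hDopen : IsOpen D) (hDconn : IsConnected D)
    (z₀ : ℂ) (hz₀ : z₀ ∈ D)
    (g : ℕ → ℂ → ℂ) (hg : ∀ n, DifferentiableOn ℂ (g n) D)
    (a : ℕ → ℝ) (ha : ∀ n, 0 < a n)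
    (hbd : ∀ K ⊆ D, IsCompact K → ∃ M : ℝ, ∀ n, ∀ z ∈ K, ‖g n z‖ ^ a n ≤ M)
    (hno : ¬ ∃ (V : Set ℂ) (v : ℂ → EReal), IsOpen V ∧ z₀ ∈ V ∧ V ⊆ D ∧
      ((∃ h : ℂ → ℝ, HarmonicOnSet h V ∧ ∀ z ∈ V, v z = (h z : EReal)) ∨
        (∀ z ∈ V, v z = ⊥)) ∧
      (∀ z ∈ V,
        liminf (fun n => (a n : EReal) * logAbsE (g n z)) atTop ≤ v z ∧
        v z ≤ limsup (fun n => (a n : EReal) * logAbsE (g n z)) atTop)) :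
    ∀ ε > 0, ∃ N : ℕ, ∀ n ≥ N, ∃ z, z ∈ D ∧ g n z = 0 ∧ ‖z - z₀‖ < ε :=
  sokal_zero_accumulation_general D hDopen z₀ hz₀ g hg a hbd hno
end

section
/- For every complex number z with |z| > 1, (1/n)·ln|F_n(z)| → ln|z| as n → ∞. -/
/-!
Substituting `k = n - j` gives `F_n(z) = z^n ∑_j p_{n-j}(n) z^{-j}`. Subtracting `1` from every
part shows `p_{n-j}(n) = p(j)` once `2j ≤ n`, and `p_{n-j}(n) ≤ p(j)` always. As `p(j)` grows
subexponentially, dominated convergence gives `z^{-n} F_n(z) → P(1/z)`, where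
`P(w) = ∑_j p(j) w^j`, so it remains to see `P(w) ≠ 0` for `|w| < 1`: the product
`P(w) ∏_{k ≤ N} (1 - w^k)` is the generating function of partitions into parts `> N`, which tends
to `1` as `N → ∞`.
-/

open Complex Filter

/-- `partsCount k n` is the number of partitions of `n` with exactly `k` parts. -/
noncomputable def partsCount (k n : ℕ) : ℕ := Nat.card {p : Nat.Partition n // p.parts.card = k}

/-- The partition polynomial `F_n(x) = ∑_{k=1}^n p_k(n) x^k`. -/
noncomputable def F (n : ℕ) (x : ℂ) : ℂ := ∑ k ∈ Finset.Icc 1 n, (partsCount k n : ℂ) * x ^ k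

open Finset Topology

theorem Multiset.sum_map_sub_one_add_card {s : Multiset ℕ} (hs : ∀ x ∈ s, 0 < x) :
    (s.map (· - 1)).sum + s.card = s.sum := by
  calc _ = (s.map fun x => x - 1 + 1).sum := by simp [Multiset.sum_map_add]
    _ = s.sum := by
      rw [Multiset.map_congr rfl fun x hx => Nat.sub_add_cancel (hs x hx), Multiset.map_id']

theorem norm_natCast_mul_pow_le {m n : ℕ} (h : m ≤ n) (w : ℂ) (j : ℕ) :
    ‖(m : ℂ) * w ^ j‖ ≤ n * ‖w‖ ^ j := by
  rw [norm_mul, norm_pow, Complex.norm_natCast]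
  gcongr

namespace Nat.Partition

theorem card_parts_le {n : ℕ} (p : n.Partition) : p.parts.card ≤ n := by
  simpa [p.parts_sum] using Multiset.card_nsmul_le_sum (a := 1) fun _ hx => p.parts_pos hx

/-- Removing the first column of the Young diagram. -/
def predPartsEquiv (m j : ℕ) :
    {p : (m + j).Partition // p.parts.card = m} ≃ {q : j.Partition // q.parts.card ≤ m} where
  toFun p := ⟨ofSums j (p.1.parts.map (· - 1)) (by
      have := Multiset.sum_map_sub_one_add_card fun _ hx => p.1.parts_pos hx
      rw [p.1.parts_sum, p.2] at this; omega),
    (Multiset.card_le_card (Multiset.filter_le _ _)).trans (by simp [p.2])⟩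
  invFun q := ⟨⟨q.1.parts.map (· + 1) + Multiset.replicate (m - q.1.parts.card) 1,
      by grind [Multiset.mem_map, Multiset.eq_of_mem_replicate],
      by simp [Multiset.sum_map_add, q.1.parts_sum]; have := q.2; omega⟩,
    by simp; have := q.2; omega⟩
  left_inv p := by
    ext1; ext1
    set t := p.1.parts.map (· - 1)
    have hp : t.map (· + 1) = p.1.parts := by
      rw [Multiset.map_map]
      exact (Multiset.map_congr rfl fun x hx => Nat.sub_add_cancel (p.1.parts_pos hx)).trans
        (Multiset.map_id' _)
    have ht : t.filter (· ≠ 0) + Multiset.replicate (t.count 0) 0 = t := by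
      rw [← Multiset.filter_eq', ← Multiset.filter_add_not (· ≠ 0) t]
      simp
    have hcard : (t.filter (· ≠ 0)).card + t.count 0 = m := by
      rw [← Multiset.card_replicate (t.count 0) 0, ← Multiset.card_add, ht, Multiset.card_map,
        p.2]
    change (t.filter (· ≠ 0)).map (· + 1) +
      Multiset.replicate (m - (t.filter (· ≠ 0)).card) 1 = _
    rw [← hp, ← hcard, Nat.add_sub_cancel_left]
    conv_rhs => rw [← ht]
    simp [Multiset.map_add]
  right_inv q := by
    ext1; ext1
    simp only [ofSums, Multiset.map_add, Multiset.map_map, Multiset.filter_add]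
    simp [Multiset.filter_eq_self.2 fun x hx => (q.1.parts_pos hx).ne', Multiset.mem_replicate]

theorem card_filter_lt_le {j s : ℕ} (hj : j ≤ s ^ 2) (p : j.Partition) :
    (p.parts.filter (s < ·)).card ≤ s := by
  have hsum : (p.parts.filter (s < ·)).sum ≤ j := by
    have := Multiset.sum_filter_add_sum_filter_not (s < ·) (s := p.parts)
    rw [p.parts_sum] at this
    omega
  have hbig : (p.parts.filter (s < ·)).card • (s + 1) ≤ (p.parts.filter (s < ·)).sum :=
    Multiset.card_nsmul_le_sum fun _ hx => Multiset.of_mem_filter hx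
  rw [smul_eq_mul] at hbig
  by_contra! h
  have : (s + 1) * (s + 1) ≤ (p.parts.filter (s < ·)).card * (s + 1) := Nat.mul_le_mul_right _ h
  nlinarith

theorem map_val_ofNat_add_replicate_filter {j s k : ℕ} {B : Multiset ℕ}
    (hB : ∀ x ∈ B, s < x ∧ x ≤ j) :
    ((B.map (Fin.ofNat (j + 1)) + Multiset.replicate k 0).map Fin.val).filter (s < ·) = B := by
  have hval : ∀ x ∈ B, (Fin.val ∘ Fin.ofNat (j + 1)) x = id x := fun x hx =>
    Nat.mod_eq_of_lt (Nat.lt_succ_of_le (hB x hx).2)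
  rw [Multiset.map_add, Multiset.map_map, Multiset.map_replicate, Multiset.filter_add,
    Multiset.map_congr rfl hval, Multiset.map_id, Multiset.filter_eq_self.2 fun x hx => (hB x hx).1]
  simp [Multiset.filter_eq_nil, Multiset.mem_replicate]

/-- A partition of `j ≤ s²` is determined by the multiplicities of its parts `≤ s` and by the
multiset of its parts `> s`, of which there are at most `s`. -/
theorem card_le_of_le_sq {j s : ℕ} (hj : j ≤ s ^ 2) :
    Fintype.card j.Partition ≤ (j + 1) ^ s * (j + s) ^ s := by
  let big (p : j.Partition) := p.parts.filter (s < ·)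
  let encode (p : j.Partition) : (Fin s → Fin (j + 1)) × Sym (Fin (j + 1)) s :=
    (fun i => Fin.ofNat (j + 1) (p.parts.count (i.val + 1)),
      ⟨(big p).map (Fin.ofNat (j + 1)) + Multiset.replicate (s - (big p).card) 0, by
        simpa using Nat.add_sub_cancel' (card_filter_lt_le hj p)⟩)
  have hinj : Function.Injective encode := by
    intro p q hpq
    obtain ⟨hsmall, hlarge⟩ := Prod.ext_iff.1 hpq
    have hbig : big p = big q := by
      have hB (r : j.Partition) : ∀ x ∈ big r, s < x ∧ x ≤ j := fun x hx =>
        ⟨Multiset.of_mem_filter hx, r.le_of_mem_parts (Multiset.mem_of_mem_filter hx)⟩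
      rw [← map_val_ofNat_add_replicate_filter (hB p) (k := s - (big p).card),
        ← map_val_ofNat_add_replicate_filter (hB q) (k := s - (big q).card)]
      exact congrArg (fun m : Sym (Fin (j + 1)) s => (m.1.map Fin.val).filter (s < ·)) hlarge
    ext1
    ext v
    rcases Nat.lt_or_ge s v with hv | hv
    · calc p.parts.count v = (big p).count v := (Multiset.count_filter_of_pos hv).symm
        _ = (big q).count v := by rw [hbig]
        _ = q.parts.count v := Multiset.count_filter_of_pos hv
    rcases Nat.eq_zero_or_pos v with rfl | hv0
    · rw [Multiset.count_eq_zero_of_notMem fun h => (p.parts_pos h).ne rfl,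
        Multiset.count_eq_zero_of_notMem fun h => (q.parts_pos h).ne rfl]
    · have := congrArg Fin.val (congrFun hsmall ⟨v - 1, by omega⟩)
      simp only [encode, Fin.val_ofNat, Nat.sub_add_cancel hv0] at this
      rwa [Nat.mod_eq_of_lt, Nat.mod_eq_of_lt] at this
      · exact Nat.lt_succ_of_le ((Multiset.count_le_card _ _).trans q.card_parts_le)
      · exact Nat.lt_succ_of_le ((Multiset.count_le_card _ _).trans p.card_parts_le)
  calc Fintype.card j.Partition ≤ Fintype.card ((Fin s → Fin (j + 1)) × Sym (Fin (j + 1)) s) :=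
        Fintype.card_le_of_injective encode hinj
    _ = (j + 1) ^ s * (j + s).choose s := by
        simp [Sym.card_sym_eq_multichoose, Nat.multichoose_eq]
    _ ≤ (j + 1) ^ s * (j + s) ^ s := Nat.mul_le_mul_left _ (Nat.choose_le_pow _ _)

theorem card_le_pow_sqrt {j : ℕ} (hj : 1 ≤ j) :
    Fintype.card j.Partition ≤ ((j.sqrt + 2) ^ 8) ^ j.sqrt := by
  set k := j.sqrt
  have hk : 1 ≤ k := Nat.le_sqrt.2 hj
  have hjk : j < (k + 1) ^ 2 := Nat.lt_succ_sqrt' j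
  calc Fintype.card j.Partition ≤ (j + 1) ^ (k + 1) * (j + (k + 1)) ^ (k + 1) :=
        card_le_of_le_sq hjk.le
    _ ≤ ((k + 2) ^ 2) ^ (k + 1) * ((k + 2) ^ 2) ^ (k + 1) := by
        gcongr <;> nlinarith
    _ = (k + 2) ^ ((2 + 2) * (k + 1)) := by rw [← mul_pow, ← pow_add, ← pow_mul]
    _ ≤ (k + 2) ^ (8 * k) := Nat.pow_le_pow_right (by omega) (by omega)
    _ = ((k + 2) ^ 8) ^ k := by rw [pow_mul]

theorem eventually_card_le_pow {r : ℝ} (hr : 1 < r) :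
    ∀ᶠ j in atTop, (Fintype.card j.Partition : ℝ) ≤ r ^ j := by
  have hpoly : ∀ᶠ k : ℕ in atTop, ((k + 2 : ℕ) : ℝ) ^ 8 ≤ r ^ k := by
    have h := (tendsto_pow_const_div_const_pow_of_one_lt 8 hr).comp (tendsto_add_atTop_nat 2)
    filter_upwards [h.eventually (ge_mem_nhds (inv_pos.2 (pow_pos (zero_lt_one.trans hr) 2)))]
      with k hk
    have hr0 : 0 < r ^ (k + 2) := pow_pos (zero_lt_one.trans hr) _
    rw [Function.comp_apply, div_le_iff₀ hr0, pow_add, mul_comm (r ^ k), ← mul_assoc,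
      inv_mul_cancel₀ (pow_pos (zero_lt_one.trans hr) 2).ne', one_mul] at hk
    exact hk
  have hsqrt : Tendsto Nat.sqrt atTop atTop :=
    tendsto_atTop_atTop.2 fun k => ⟨k * k, fun j hj => Nat.le_sqrt.2 hj⟩
  filter_upwards [hsqrt.eventually hpoly, eventually_ge_atTop 1] with j hj hj1
  calc (Fintype.card j.Partition : ℝ) ≤ (((j.sqrt + 2 : ℕ) : ℝ) ^ 8) ^ j.sqrt := by
        exact_mod_cast card_le_pow_sqrt hj1
    _ ≤ (r ^ j.sqrt) ^ j.sqrt := by gcongr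
    _ = r ^ (j.sqrt * j.sqrt) := by rw [← pow_mul]
    _ ≤ r ^ j := pow_le_pow_right₀ hr.le (Nat.sqrt_le j)

theorem summable_card_mul_pow {t : ℝ} (ht0 : 0 ≤ t) (ht : t < 1) :
    Summable fun j => (Fintype.card j.Partition : ℝ) * t ^ j := by
  set r := 2 / (1 + t)
  have hr : 1 < r := by rw [lt_div_iff₀ (by linarith)]; linarith
  have hrt : r * t < 1 := by rw [div_mul_eq_mul_div, div_lt_one (by linarith)]; linarith
  refine Summable.of_norm_bounded_eventually_nat
    (summable_geometric_of_lt_one (by positivity) hrt) ?_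
  filter_upwards [eventually_card_le_pow hr] with j hj
  rw [Real.norm_of_nonneg (by positivity), mul_pow]
  gcongr

theorem card_restricted_lt_of_le {N j : ℕ} (h : j ≤ N) :
    #(restricted j (N < ·)) = if j = 0 then 1 else 0 := by
  split_ifs with hj
  · subst hj
    rw [Finset.card_eq_one]
    exact ⟨default, Finset.eq_singleton_iff_unique_mem.2
      ⟨by simp [restricted], fun p _ => Subsingleton.elim _ _⟩⟩
  · rw [Finset.card_eq_zero, restricted, Finset.filter_eq_empty_iff]
    intro p _ hp
    obtain ⟨i, hi⟩ : ∃ i, i ∈ p.parts := Multiset.exists_mem_of_ne_zero fun h0 => by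
      simpa [h0, eq_comm, hj] using p.parts_sum
    exact absurd (hp i hi) (not_lt.2 ((p.le_of_mem_parts hi).trans h))

theorem card_restricted_lt_filter_mem (N j : ℕ) :
    #{p ∈ restricted j (N < ·) | N + 1 ∈ p.parts} =
      if N + 1 ≤ j then #(restricted (j - (N + 1)) (N < ·)) else 0 := by
  split_ifs with hj
  · let e := partitionWithPartEquiv (Nat.le_add_left 1 N) hj
    refine Finset.card_bij' (fun p hp => e ⟨p, (Finset.mem_filter.1 hp).2⟩)
      (fun q _ => (e.symm q).1) (fun p hp => ?_) (fun q hq => ?_) (fun p _ => by simp [e])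
      (fun q _ => by simp [e])
    · simp only [restricted, Finset.mem_filter, Finset.mem_univ, true_and] at hp ⊢
      intro i hi
      rw [partitionWithPartEquiv_apply_parts] at hi
      exact hp.1 i (Multiset.mem_of_mem_erase hi)
    · simp only [restricted, Finset.mem_filter, Finset.mem_univ, true_and] at hq ⊢
      rw [partitionWithPartEquiv_symm_apply_parts]
      exact ⟨by simpa using hq, Multiset.mem_cons_self _ _⟩
  · rw [Finset.card_eq_zero, Finset.filter_eq_empty_iff]
    exact fun p _ hp => hj (p.le_of_mem_parts hp)

theorem card_restricted_lt (N j : ℕ) :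
    #(restricted j (N < ·)) = #(restricted j (N + 1 < ·)) +
      if N + 1 ≤ j then #(restricted (j - (N + 1)) (N < ·)) else 0 := by
  rw [← card_restricted_lt_filter_mem,
    ← Finset.card_filter_add_card_filter_not (fun p => N + 1 ∈ p.parts), add_comm]
  congr 2
  ext p
  simp only [restricted, Finset.mem_filter, Finset.mem_univ, true_and]
  constructor <;> grind

theorem restricted_zero_lt (j : ℕ) : restricted j (0 < ·) = univ :=
  Finset.filter_true_of_mem fun p _ _ hi => p.parts_pos hi

noncomputable def restrictedGenFun (N : ℕ) (w : ℂ) : ℂ :=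
  ∑' j, (#(restricted j (N < ·)) : ℂ) * w ^ j

section GenFun

variable {w : ℂ} (hw : ‖w‖ < 1)
include hw

theorem summable_restricted_mul_pow (N : ℕ) :
    Summable fun j => (#(restricted j (N < ·)) : ℂ) * w ^ j :=
  Summable.of_norm_bounded (summable_card_mul_pow (norm_nonneg w) hw) fun j =>
    norm_natCast_mul_pow_le (card_le_univ _) w j

theorem hasSum_restrictedGenFun (N : ℕ) :
    HasSum (fun j => (#(restricted j (N < ·)) : ℂ) * w ^ j) (restrictedGenFun N w) :=
  (summable_restricted_mul_pow hw N).hasSum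

theorem restrictedGenFun_succ (N : ℕ) :
    restrictedGenFun (N + 1) w = restrictedGenFun N w * (1 - w ^ (N + 1)) := by
  have hshift : HasSum
      (fun j => if N + 1 ≤ j then (#(restricted (j - (N + 1)) (N < ·)) : ℂ) * w ^ j else 0)
      (w ^ (N + 1) * restrictedGenFun N w) := by
    refine ((add_left_injective (N + 1)).hasSum_iff fun j hj => if_neg fun h => hj ?_).1 ?_
    · exact ⟨j - (N + 1), Nat.sub_add_cancel h⟩
    · refine ((hasSum_restrictedGenFun hw N).mul_left (w ^ (N + 1))).congr_fun fun j => ?_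
      rw [Function.comp_apply, if_pos (Nat.le_add_left _ _), Nat.add_sub_cancel, pow_add]
      ring
  have hsplit : HasSum (fun j => (#(restricted j (N < ·)) : ℂ) * w ^ j)
      (restrictedGenFun (N + 1) w + w ^ (N + 1) * restrictedGenFun N w) := by
    refine ((hasSum_restrictedGenFun hw (N + 1)).add hshift).congr_fun fun j => ?_
    rw [card_restricted_lt N j]
    split_ifs <;> push_cast <;> ring
  linear_combination hsplit.unique (hasSum_restrictedGenFun hw N)

theorem restrictedGenFun_eq_mul_prod (N : ℕ) :
    restrictedGenFun N w = restrictedGenFun 0 w * ∏ k ∈ range N, (1 - w ^ (k + 1)) := by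
  induction N with
  | zero => simp
  | succ N ih => rw [restrictedGenFun_succ hw, ih, prod_range_succ, mul_assoc]

theorem tendsto_restrictedGenFun : Tendsto (restrictedGenFun · w) atTop (𝓝 1) := by
  have hlim (j : ℕ) : Tendsto (fun N => (#(restricted j (N < ·)) : ℂ) * w ^ j) atTop
      (𝓝 (if j = 0 then 1 else 0)) := by
    refine tendsto_const_nhds.congr' ?_
    filter_upwards [eventually_ge_atTop j] with N hN
    rw [card_restricted_lt_of_le hN]
    split_ifs with hj <;> simp [hj]
  simpa [restrictedGenFun] using tendsto_tsum_of_dominated_convergence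
    (summable_card_mul_pow (norm_nonneg w) hw) hlim
    (Eventually.of_forall fun N j => norm_natCast_mul_pow_le (card_le_univ _) w j)

theorem tsum_card_mul_pow_ne_zero : ∑' j, (Fintype.card j.Partition : ℂ) * w ^ j ≠ 0 := by
  intro h0
  have hG : ∀ N, restrictedGenFun N w = 0 := fun N => by
    rw [restrictedGenFun_eq_mul_prod hw, restrictedGenFun]
    simp [restricted_zero_lt, h0]
  have := tendsto_restrictedGenFun hw
  simp only [hG] at this
  exact one_ne_zero (tendsto_nhds_unique this tendsto_const_nhds)

end GenFun

end Nat.Partition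

theorem partsCount_add (m j : ℕ) :
    partsCount m (m + j) = Fintype.card {q : j.Partition // q.parts.card ≤ m} := by
  rw [partsCount, Nat.card_congr (Nat.Partition.predPartsEquiv m j), Nat.card_eq_fintype_card]

theorem partsCount_zero_left {n : ℕ} (hn : n ≠ 0) : partsCount 0 n = 0 := by
  rw [partsCount, Nat.card_eq_zero]
  refine Or.inl ⟨fun ⟨p, hp⟩ => hn ?_⟩
  simpa [Multiset.card_eq_zero.1 hp, eq_comm] using p.parts_sum

theorem partsCount_sub_le {n : ℕ} (hn : n ≠ 0) (j : ℕ) :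
    partsCount (n - j) n ≤ Fintype.card j.Partition := by
  rcases le_or_gt j n with hj | hj
  · obtain ⟨m, rfl⟩ := Nat.exists_eq_add_of_le' hj
    rw [Nat.add_sub_cancel, partsCount_add]
    exact Fintype.card_subtype_le _
  · rw [Nat.sub_eq_zero_of_le hj.le, partsCount_zero_left hn]
    exact Nat.zero_le _

theorem partsCount_sub_eq {n j : ℕ} (h : 2 * j ≤ n) :
    partsCount (n - j) n = Fintype.card j.Partition := by
  obtain ⟨m, rfl⟩ := Nat.exists_eq_add_of_le' (show j ≤ n by omega)
  rw [Nat.add_sub_cancel, partsCount_add]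
  exact Fintype.card_congr (Equiv.subtypeUnivEquiv fun q => q.card_parts_le.trans (by omega))

theorem F_eq_pow_mul_tsum {n : ℕ} (hn : n ≠ 0) {z : ℂ} (hz : z ≠ 0) :
    F n z = z ^ n * ∑' j, (partsCount (n - j) n : ℂ) * z⁻¹ ^ j := by
  rw [tsum_eq_sum (s := range n), mul_sum, F]
  · refine sum_nbij' (n - ·) (n - ·) ?_ ?_ ?_ ?_ ?_ <;> intro k hk <;>
      simp only [mem_Icc, mem_range] at hk
    · exact mem_range.2 (by omega)
    · exact mem_Icc.2 (by omega)
    · omega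
    · omega
    · rw [Nat.sub_sub_self hk.2, inv_pow, ← pow_sub_mul_pow z hk.2]
      field_simp
  · intro j hj
    rw [Nat.sub_eq_zero_of_le (not_lt.1 (mem_range.not.1 hj)), partsCount_zero_left hn,
      Nat.cast_zero, zero_mul]

theorem tendsto_tsum_partsCount_mul_pow {w : ℂ} (hw : ‖w‖ < 1) :
    Tendsto (fun n => ∑' j, (partsCount (n - j) n : ℂ) * w ^ j) atTop
      (𝓝 (∑' j, (Fintype.card j.Partition : ℂ) * w ^ j)) := by
  refine tendsto_tsum_of_dominated_convergence
    (Nat.Partition.summable_card_mul_pow (norm_nonneg w) hw) (fun j => ?_) ?_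
  · refine tendsto_const_nhds.congr' ?_
    filter_upwards [eventually_ge_atTop (2 * j)] with n hn
    rw [partsCount_sub_eq hn]
  · filter_upwards [eventually_ne_atTop 0] with n hn j
    exact norm_natCast_mul_pow_le (partsCount_sub_le hn j) w j

theorem tendsto_log_norm_pow_mul_div {𝕜 : Type*} [NormedDivisionRing 𝕜] {z : 𝕜}
    (hz : z ≠ 0) {a : ℕ → 𝕜} {L : 𝕜} (ha : Tendsto a atTop (𝓝 L)) (hL : L ≠ 0) :
    Tendsto (fun n : ℕ => Real.log ‖z ^ n * a n‖ / n) atTop (𝓝 (Real.log ‖z‖)) := by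
  have hlog : Tendsto (fun n : ℕ => Real.log ‖a n‖ / n) atTop (𝓝 0) :=
    (ha.norm.log (norm_ne_zero_iff.2 hL)).div_atTop tendsto_natCast_atTop_atTop
  have hsum := hlog.const_add (Real.log ‖z‖)
  rw [add_zero] at hsum
  refine hsum.congr' ?_
  filter_upwards [ha.eventually_ne hL, eventually_ne_atTop 0] with n han hn
  rw [norm_mul, norm_pow, Real.log_mul (pow_ne_zero _ (norm_ne_zero_iff.2 hz))
    (norm_ne_zero_iff.2 han), Real.log_pow]
  field_simp

/-- Outside the unit disk, `(1/n)·ln|Fₙ(z)| → ln|z|`. -/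
theorem log_abs_partition_poly_outside (z : ℂ) (hz : 1 < ‖z‖) :
    Tendsto (fun n : ℕ => Real.log ‖F n z‖ / n) atTop (nhds (Real.log ‖z‖)) := by
  have hz0 : z ≠ 0 := norm_pos_iff.1 (one_pos.trans hz)
  have hw : ‖z⁻¹‖ < 1 := by rw [norm_inv]; exact inv_lt_one_of_one_lt₀ hz
  refine (tendsto_log_norm_pow_mul_div hz0 (tendsto_tsum_partsCount_mul_pow hw)
    (Nat.Partition.tsum_card_mul_pow_ne_zero hw)).congr' ?_
  filter_upwards [eventually_ne_atTop 0] with n hn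
  rw [F_eq_pow_mul_tsum hn hz0]
end
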